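/- Suppose given a commutative diagram of abelian groups with exact columns in which the rows are complexes: top row 0 → 0 → (E/μ_p)♭ → E♭ → 0, middle row 0 → M → G♭ → E♭ → 0, bottom row 0 → M → M → 0 → 0 (identity on M). If additionally there is an exact sequence 0 → ℤ/pℤ → (E/μ_p)♭ → E♭ → 0, then the middle row 0 → M → G♭ → E♭ → 0 has middle cohomology isomorphic to ℤ/pℤ; in particular it is not exact. -/

import Mathlib

/-! The section `i` of `v` splits the middle column: there is a retraction
`ρ : G♭ → (E/μ_p)♭` with `u ∘ ρ = id - i ∘ v`. Since `q ∘ i = 0`, the middle row factors as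
`q = t ∘ ρ`, and `ker ρ = im i`; as `ρ` is onto, `ker q / im i ≅ ker t ≅ ℤ/pℤ`. -/

open Function

namespace AddMonoidHom

variable {A B C : Type*} [AddCommGroup A] [AddCommGroup B] [AddCommGroup C]

theorem ker_addSubgroupComap (ρ : B →+ A) (K : AddSubgroup A) :
    (ρ.addSubgroupComap K).ker = ρ.ker.addSubgroupOf (K.comap ρ) := by
  ext x
  rw [mem_ker, AddSubgroup.mem_addSubgroupOf, mem_ker, ← ZeroMemClass.coe_eq_zero]
  rfl

noncomputable def comapQuotientKerEquivOfSurjective (ρ : B →+ A) (hρ : Surjective ρ)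
    (K : AddSubgroup A) : K.comap ρ ⧸ ρ.ker.addSubgroupOf (K.comap ρ) ≃+ K :=
  (QuotientAddGroup.quotientAddEquivOfEq (ker_addSubgroupComap ρ K).symm).trans
    (QuotientAddGroup.quotientKerEquivOfSurjective _
      (ρ.addSubgroupComap_surjective_of_surjective K hρ))

theorem exists_retraction_of_range_eq_ker {u : A →+ B} {v : B →+ C} (hu : Injective u)
    (huv : u.range = v.ker) {s : C →+ B} (hvs : v.comp s = .id C) :
    ∃ ρ : B →+ A, ∀ b, u (ρ b) = b - s (v b) := by
  have hmem : ∀ b, b - s (v b) ∈ u.range := fun b => by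
    rw [huv, mem_ker, map_sub, ← comp_apply, hvs, id_apply, sub_self]
  exact ⟨(ofInjective hu).symm.toAddMonoidHom.comp
      ((AddMonoidHom.id B - s.comp v).codRestrict _ hmem),
    fun b => apply_ofInjective_symm hu ⟨_, hmem b⟩⟩

section Retraction

variable {u : A →+ B} {v : B →+ C} {s : C →+ B} {ρ : B →+ A}

theorem leftInverse_retraction (hρ : ∀ b, u (ρ b) = b - s (v b)) (hu : Injective u)
    (huv : u.range = v.ker) : LeftInverse ρ u := by
  intro a
  have hvu : v (u a) = 0 := by rw [← mem_ker, ← huv]; exact ⟨a, rfl⟩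
  exact hu (by rw [hρ, hvu, map_zero, sub_zero])

theorem ker_retraction (hρ : ∀ b, u (ρ b) = b - s (v b)) (hu : Injective u)
    (hvs : v.comp s = .id C) : ρ.ker = s.range := by
  ext b
  rw [mem_ker, ← map_eq_zero_iff u hu, hρ, sub_eq_zero]
  refine ⟨fun h => ⟨v b, h.symm⟩, ?_⟩
  rintro ⟨c, rfl⟩
  rw [← comp_apply v s, hvs, id_apply]

theorem eq_comp_retraction {D : Type*} [AddCommGroup D] {q : B →+ D}
    (hρ : ∀ b, u (ρ b) = b - s (v b)) (hqs : q.comp s = 0) :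
    q = (q.comp u).comp ρ := by
  ext b
  have hqs' : q (s (v b)) = 0 := by rw [← comp_apply, hqs, zero_apply]
  rw [comp_apply, comp_apply, hρ, map_sub, hqs', sub_zero]

end Retraction

end AddMonoidHom

open AddMonoidHom in
theorem middle_cohomology_is_zmod_p_general
    {M Gf Ef EPf : Type*} [AddCommGroup M] [AddCommGroup Gf]
    [AddCommGroup Ef] [AddCommGroup EPf] (p : ℕ) (hp : p.Prime)
    -- middle row, a complex
    (i : M →+ Gf) (q : Gf →+ Ef)
    (hcplx : q.comp i = 0)
    -- top row map
    (t : EPf →+ Ef)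
    -- middle column, exact: 0 → (E/μ_p)♭ → G♭ → M → 0
    (u : EPf →+ Gf) (v : Gf →+ M)
    (hu : Function.Injective u) (huv : u.range = v.ker)
    -- commutativity of the squares
    (hsq₁ : q.comp u = t) (hsq₂ : v.comp i = AddMonoidHom.id M)
    -- the exact sequence 0 → ℤ/pℤ → (E/μ_p)♭ → E♭ → 0
    (w : ZMod p →+ EPf) (hw : Function.Injective w)
    (hwt : w.range = t.ker) :
    Nonempty ((↥q.ker ⧸ (i.range.addSubgroupOf q.ker)) ≃+ ZMod p) ∧
    i.range ≠ q.ker := by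
  obtain ⟨ρ, hρ⟩ := exists_retraction_of_range_eq_ker hu huv hsq₂
  have hq : q = t.comp ρ := hsq₁ ▸ eq_comp_retraction hρ hcplx
  have e : (↥q.ker ⧸ (i.range.addSubgroupOf q.ker)) ≃+ ZMod p := by
    rw [hq, ← ker_retraction hρ hu hsq₂, ← comap_ker, ← hwt]
    have hρ_surj : Surjective ρ := (leftInverse_retraction hρ hu huv).surjective
    exact (comapQuotientKerEquivOfSurjective ρ hρ_surj w.range).trans (ofInjective hw).symm
  refine ⟨⟨e⟩, fun h => ?_⟩
  rw [h, AddSubgroup.addSubgroupOf_self] at e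
  have : Nontrivial (ZMod p) := ZMod.nontrivial_iff.mpr hp.ne_one
  have := QuotientAddGroup.subsingleton_quotient_top (G := q.ker)
  exact not_subsingleton (ZMod p) e.symm.injective.subsingleton

/-- Diagram chase from Example "flats are not exact". Given a
commutative diagram of abelian groups with exact columns, whose rows are the
complexes `0 → (E/μ_p)♭ → E♭ → 0` (top), `0 → M → G♭ → E♭ → 0` (middle) and
`0 → M = M → 0 → 0` (bottom), and an exact sequence
`0 → ℤ/pℤ → (E/μ_p)♭ → E♭ → 0`, the middle cohomology of the middle row is
`ℤ/pℤ`; in particular the middle row is not exact. -/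
theorem middle_cohomology_is_zmod_p
    {M Gf Ef EPf : Type*} [AddCommGroup M] [AddCommGroup Gf]
    [AddCommGroup Ef] [AddCommGroup EPf] (p : ℕ) (hp : p.Prime)
    -- middle row, a complex
    (i : M →+ Gf) (q : Gf →+ Ef) (hi : Function.Injective i)
    (hcplx : q.comp i = 0) (hq : Function.Surjective q)
    -- top row map
    (t : EPf →+ Ef)
    -- middle column, exact: 0 → (E/μ_p)♭ → G♭ → M → 0
    (u : EPf →+ Gf) (v : Gf →+ M)
    (hu : Function.Injective u) (huv : u.range = v.ker)
    (hv : Function.Surjective v)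
    -- commutativity of the squares
    (hsq₁ : q.comp u = t) (hsq₂ : v.comp i = AddMonoidHom.id M)
    -- the exact sequence 0 → ℤ/pℤ → (E/μ_p)♭ → E♭ → 0
    (w : ZMod p →+ EPf) (hw : Function.Injective w)
    (hwt : w.range = t.ker) (ht : Function.Surjective t) :
    Nonempty ((↥q.ker ⧸ (i.range.addSubgroupOf q.ker)) ≃+ ZMod p) ∧
    i.range ≠ q.ker :=
  middle_cohomology_is_zmod_p_general p hp i q hcplx t u v hu huv hsq₁ hsq₂ w hw hwt
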